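/- arXiv:2301.08575 — 2 statements merged into one kernel-verified Lean document; each statement's English description precedes it below -/
import Mathlib

section
/- Let α > -1, let n ≥ 1 be an integer, let a, c ∈ ℝ and b ∈ 𝔻, and suppose φ : 𝔻 → 𝔻 is the analytic self-map given by φ(z) = b + cz/(1 - conj(b)·z) and ψ(z) = a·z^n / (1 - conj(b)·z)^{n+α+2} for z ∈ 𝔻. Then for all z, w ∈ 𝔻, p·z^n·conj(ψ(w)) / (1 - z·conj(φ(w)))^{n+α+2} = p·conj(w)^n·ψ(z) / (1 - conj(w)·φ(z))^{n+α+2}; in fact both sides equal a·p·(z·conj(w))^n / (1 - conj(b)·z - b·conj(w) + |b|²·conj(w)·z - c·conj(w)·z)^{n+α+2}. -/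
/-!
Both kernel denominators are factors of the same expression
`D = 1 - b̄z - bw̄ + |b|²w̄z - cw̄z`: with `φ(w) = b + cw/(1 - b̄w)` and `c` real,
`D = conj (1 - b̄w) · (1 - z·conj φ(w)) = (1 - b̄z) · (1 - w̄·φ(z))`.
All these factors lie in the right half-plane, where the principal power is multiplicative
and commutes with conjugation for real exponents, so each side of the identity collapses
to `a·p·(zw̄)ⁿ / D^(n+α+2)`.
-/

open ComplexConjugate Metric Set

namespace Complex

theorem mul_cpow_of_arg_add_arg_mem {x y : ℂ} (hx : x ≠ 0) (hy : y ≠ 0)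
    (h : arg x + arg y ∈ Ioc (-Real.pi) Real.pi) (s : ℂ) :
    (x * y) ^ s = x ^ s * y ^ s := by
  rw [cpow_def_of_ne_zero (mul_ne_zero hx hy), log_mul hx hy h, add_mul, exp_add,
    ← cpow_def_of_ne_zero hx, ← cpow_def_of_ne_zero hy]

theorem mul_cpow_of_re_pos {x y : ℂ} (hx : 0 < x.re) (hy : 0 < y.re) (s : ℂ) :
    (x * y) ^ s = x ^ s * y ^ s := by
  have hx' := abs_lt.mp (abs_arg_lt_pi_div_two_iff.mpr (Or.inl hx))
  have hy' := abs_lt.mp (abs_arg_lt_pi_div_two_iff.mpr (Or.inl hy))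
  exact mul_cpow_of_arg_add_arg_mem (fun h ↦ by simp [h] at hx) (fun h ↦ by simp [h] at hy)
    ⟨by linarith, by linarith [Real.pi_pos]⟩ s

theorem conj_cpow_ofReal {x : ℂ} (hx : x.arg ≠ Real.pi) (s : ℝ) :
    conj (x ^ (s : ℂ)) = conj x ^ (s : ℂ) := by
  rw [conj_cpow x _ hx, conj_ofReal]

theorem re_one_sub_mul_pos {u v : ℂ} (hu : ‖u‖ ≤ 1) (hv : ‖v‖ < 1) : 0 < (1 - u * v).re := by
  have huv : ‖u * v‖ < 1 := by
    rw [norm_mul]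
    exact mul_lt_one_of_nonneg_of_lt_one_right hu (norm_nonneg v) hv
  have hre : (u * v).re < 1 := (re_le_norm (u * v)).trans_lt huv
  simpa only [sub_re, one_re, sub_pos] using hre

end Complex

open Complex

theorem kernel_denom_eq_conj_mul (b z w : ℂ) (c : ℝ) (hw : 1 - conj b * w ≠ 0) :
    1 - conj b * z - b * conj w + ((‖b‖ : ℝ) : ℂ) ^ 2 * conj w * z - c * conj w * z
      = conj (1 - conj b * w) * (1 - z * conj (b + c * w / (1 - conj b * w))) := by
  have hw' : 1 - b * conj w ≠ 0 := fun h ↦ hw (by simpa using congrArg conj h)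
  simp only [map_add, map_mul, map_div₀, map_sub, map_one, conj_conj, conj_ofReal]
  rw [← ofReal_pow, ← normSq_eq_norm_sq, normSq_eq_conj_mul_self]
  field_simp
  ring

theorem kernel_denom_eq_mul (b z w : ℂ) (c : ℝ) (hz : 1 - conj b * z ≠ 0) :
    1 - conj b * z - b * conj w + ((‖b‖ : ℝ) : ℂ) ^ 2 * conj w * z - c * conj w * z
      = (1 - conj b * z) * (1 - conj w * (b + c * z / (1 - conj b * z))) := by
  rw [← ofReal_pow, ← normSq_eq_norm_sq, normSq_eq_conj_mul_self]
  field_simp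
  ring

theorem stmt10_general (α : ℝ) (n : ℕ)
    (a c : ℝ) (b : ℂ) (hb : b ∈ Metric.ball (0 : ℂ) 1)
    (φ ψ : ℂ → ℂ)
    (hφdef : ∀ z ∈ Metric.ball (0 : ℂ) 1,
      φ z = b + (c : ℂ) * z / (1 - conj b * z))
    (hφmap : ∀ z ∈ Metric.ball (0 : ℂ) 1, φ z ∈ Metric.ball (0 : ℂ) 1)
    (hψdef : ∀ z ∈ Metric.ball (0 : ℂ) 1,
      ψ z = (a : ℂ) * z ^ n / (1 - conj b * z) ^ ((n : ℂ) + α + 2))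
    (p : ℂ) :
    ∀ z ∈ Metric.ball (0 : ℂ) 1, ∀ w ∈ Metric.ball (0 : ℂ) 1,
      p * z ^ n * conj (ψ w) / (1 - z * conj (φ w)) ^ ((n : ℂ) + α + 2)
        = p * (conj w) ^ n * ψ z / (1 - conj w * φ z) ^ ((n : ℂ) + α + 2) ∧
      p * z ^ n * conj (ψ w) / (1 - z * conj (φ w)) ^ ((n : ℂ) + α + 2)
        = (a : ℂ) * p * (z * conj w) ^ n /
            (1 - conj b * z - b * conj w + ((‖b‖ : ℝ) : ℂ) ^ 2 * conj w * z
              - (c : ℂ) * conj w * z) ^ ((n : ℂ) + α + 2) := by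
  intro z hz w hw
  have hz' := mem_ball_zero_iff.mp hz
  have hw' := mem_ball_zero_iff.mp hw
  have hb' : ‖conj b‖ ≤ 1 := by simpa using (mem_ball_zero_iff.mp hb).le
  have hbw : 0 < (1 - conj b * w).re := re_one_sub_mul_pos hb' hw'
  have hbz : 0 < (1 - conj b * z).re := re_one_sub_mul_pos hb' hz'
  have hφw : 0 < (1 - z * conj (φ w)).re :=
    re_one_sub_mul_pos hz'.le (by simpa using mem_ball_zero_iff.mp (hφmap w hw))
  have hφz : 0 < (1 - conj w * φ z).re :=
    re_one_sub_mul_pos (by simpa using hw'.le) (mem_ball_zero_iff.mp (hφmap z hz))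
  set D := 1 - conj b * z - b * conj w + ((‖b‖ : ℝ) : ℂ) ^ 2 * conj w * z - c * conj w * z
  have hD₁ : D = conj (1 - conj b * w) * (1 - z * conj (φ w)) := by
    rw [hφdef w hw]
    exact kernel_denom_eq_conj_mul b z w c (fun h ↦ by simp [h] at hbw)
  have hD₂ : D = (1 - conj b * z) * (1 - conj w * φ z) := by
    rw [hφdef z hz]
    exact kernel_denom_eq_mul b z w c (fun h ↦ by simp [h] at hbz)
  have hs : (n : ℂ) + α + 2 = ((n + α + 2 : ℝ) : ℂ) := by push_cast; ring
  have hconj_ψ : conj (ψ w) = a * conj w ^ n / conj (1 - conj b * w) ^ ((n : ℂ) + α + 2) := by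
    rw [hψdef w hw, map_div₀, map_mul, map_pow, conj_ofReal, hs,
      conj_cpow_ofReal (slitPlane_arg_ne_pi (mem_slitPlane_iff.mpr (Or.inl hbw)))]
  have key₁ : p * z ^ n * conj (ψ w) / (1 - z * conj (φ w)) ^ ((n : ℂ) + α + 2)
      = a * p * (z * conj w) ^ n / D ^ ((n : ℂ) + α + 2) := by
    rw [hD₁, hconj_ψ, mul_cpow_of_re_pos (by rwa [conj_re]) hφw, mul_pow]
    ring
  have key₂ : p * conj w ^ n * ψ z / (1 - conj w * φ z) ^ ((n : ℂ) + α + 2)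
      = a * p * (z * conj w) ^ n / D ^ ((n : ℂ) + α + 2) := by
    rw [hD₂, hψdef z hz, mul_cpow_of_re_pos hbz hφz, mul_pow]
    ring
  exact ⟨key₁.trans key₂.symm, key₁⟩

/-- Theorem 2.4 (converse direction): for symbols of the stated form with real
parameters `a, c`, the reproducing-kernel identity for Hermitianness holds, and
both sides have the indicated common value. -/
theorem stmt10 (α : ℝ) (hα : -1 < α) (n : ℕ) (hn : 1 ≤ n)
    (a c : ℝ) (b : ℂ) (hb : b ∈ Metric.ball (0 : ℂ) 1)
    (φ ψ : ℂ → ℂ)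
    (hφdef : ∀ z ∈ Metric.ball (0 : ℂ) 1,
      φ z = b + (c : ℂ) * z / (1 - conj b * z))
    (hφmap : ∀ z ∈ Metric.ball (0 : ℂ) 1, φ z ∈ Metric.ball (0 : ℂ) 1)
    (hψdef : ∀ z ∈ Metric.ball (0 : ℂ) 1,
      ψ z = (a : ℂ) * z ^ n / (1 - conj b * z) ^ ((n : ℂ) + α + 2))
    (p : ℂ) (hp : p = ∏ j ∈ Finset.range n, ((α : ℂ) + 2 + j)) :
    ∀ z ∈ Metric.ball (0 : ℂ) 1, ∀ w ∈ Metric.ball (0 : ℂ) 1,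
      p * z ^ n * conj (ψ w) / (1 - z * conj (φ w)) ^ ((n : ℂ) + α + 2)
        = p * (conj w) ^ n * ψ z / (1 - conj w * φ z) ^ ((n : ℂ) + α + 2) ∧
      p * z ^ n * conj (ψ w) / (1 - z * conj (φ w)) ^ ((n : ℂ) + α + 2)
        = (a : ℂ) * p * (z * conj w) ^ n /
            (1 - conj b * z - b * conj w + ((‖b‖ : ℝ) : ℂ) ^ 2 * conj w * z
              - (c : ℂ) * conj w * z) ^ ((n : ℂ) + α + 2) :=
  stmt10_general α n a c b hb φ ψ hφdef hφmap hψdef p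
end

section
/- Let n ≥ 1 be an integer, let μ, η ∈ ℂ with |μ| = |η| = 1, let φ : 𝔻 → 𝔻 be analytic, and let ψ be analytic on 𝔻 and not identically zero. Suppose that for all z, w ∈ 𝔻, μ·ψ(z)·∑_{k=n}^∞ (k!/(k-n)!)·δ_k·(ηw)^k·φ(z)^{k-n} = μ·ψ(w)·∑_{k=n}^∞ (k!/(k-n)!)·δ_k·(ηz)^k·φ(w)^{k-n}. Then, with b = φ(0), there exist a, c ∈ ℂ such that for all z ∈ 𝔻: ψ(z) = (a/(n!·δ_n))·F₁(z), and φ(z)·F₁(z) = b·F₁(z) + c·((n+3)/(n+1)²)·F₂(z), where F₁(z) = ∑_{k=n}^∞ (k!/(k-n)!)·δ_k·(ηb)^{k-n}·z^k and F₂(z) = ∑_{k=n+1}^∞ (k!/(k-n-1)!)·δ_k·(ηb)^{k-n-1}·z^k. -/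
/-!
After cancelling `μ ηⁿ`, the hypothesis says that `ψ(z) wⁿ g(ηwφ(z))` is symmetric in `(z, w)`,
where `g = kernelDeriv n` is the `n`-th derivative of the kernel profile `x ↦ ∑ δ_k xᵏ`.
Fixing a small `z₀ ≠ 0`, the identity at `(z₀, w)` writes `ψ(w) = wⁿ q(w)` with `q` continuous
at `0`; letting `w → 0` in the identity at `(z, w)` gives `ψ(z) g(0) = α zⁿ g(ηbz)` with
`α = q(0) ≠ 0`, and `F₁(z) = zⁿ g(ηbz)`. Substituting this back, `g(ηbz) g(ηwφ(z))` is symmetric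
in `(z, w)`; differentiating in `w` at `0`, with `g' = kernelDeriv (n + 1)` and
`F₂(z) = zⁿ⁺¹ g'(ηbz)`, gives the second formula with `c = φ'(0)`, the constant
`(n+3)/(n+1)²` being `g(0)/g'(0)`.
-/

open ComplexConjugate

/-- `δ_k = 2/((k+1)(k+2))`, the coefficients of the reproducing kernel of the
derivative Hardy space `S²₁(𝔻)`. -/
noncomputable def hardyDelta (k : ℕ) : ℂ := 2 / (((k : ℂ) + 1) * ((k : ℂ) + 2))

/-- `F₁(z) = ∑_{k=n}^∞ (k!/(k-n)!) δ_k u^{k-n} z^k` (index shifted by `n`),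
with `u = ηb`. -/
noncomputable def F1 (n : ℕ) (u z : ℂ) : ℂ :=
  ∑' k : ℕ, (Nat.factorial (k + n) : ℂ) / (Nat.factorial k : ℂ) *
    hardyDelta (k + n) * u ^ k * z ^ (k + n)

/-- `F₂(z) = ∑_{k=n+1}^∞ (k!/(k-n-1)!) δ_k u^{k-n-1} z^k` (index shifted by `n+1`),
with `u = ηb`. -/
noncomputable def F2 (n : ℕ) (u z : ℂ) : ℂ :=
  ∑' k : ℕ, (Nat.factorial (k + n + 1) : ℂ) / (Nat.factorial k : ℂ) *
    hardyDelta (k + n + 1) * u ^ k * z ^ (k + n + 1)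

open Metric Set Filter Topology

theorem summable_add_pow_mul_geometric (m p : ℕ) {r : ℝ} (hr0 : 0 < r) (hr : r < 1) :
    Summable (fun k : ℕ => ((k : ℝ) + m) ^ p * r ^ k) := by
  have h : Summable (fun k : ℕ => ((k + m : ℕ) : ℝ) ^ p * r ^ (k + m)) :=
    (summable_nat_add_iff m).mpr
      (summable_pow_mul_geometric_of_norm_lt_one (R := ℝ) p (by rwa [Real.norm_of_nonneg hr0.le]))
  refine (h.mul_left (r ^ m)⁻¹).congr fun k => ?_
  have hrm : r ^ m ≠ 0 := pow_ne_zero m hr0.ne'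
  simp only [pow_add, Nat.cast_add]
  field_simp

theorem hasDerivAt_tsum_mul_pow {𝕜 : Type*} [RCLike 𝕜] {a : ℕ → 𝕜} {C : ℝ} {p : ℕ}
    (ha : ∀ k, ‖a k‖ ≤ C * ((k : ℝ) + 1) ^ p) {x : 𝕜} (hx : ‖x‖ < 1) :
    HasDerivAt (fun y => ∑' k, a k * y ^ k) (∑' k, (k + 1) * a (k + 1) * x ^ k) x := by
  obtain ⟨r, hxr, hr1⟩ := exists_between hx
  have hr0 : 0 < r := (norm_nonneg x).trans_lt hxr
  have hbound : ∀ k, ∀ y ∈ ball (0 : 𝕜) r,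
      ‖a k * (k * y ^ (k - 1))‖ ≤ C * ((k : ℝ) + 1) ^ (p + 1) * r ^ (k - 1) := by
    intro k y hy
    rw [mem_ball_zero_iff] at hy
    have hC : 0 ≤ C := by simpa using (norm_nonneg _).trans (ha 0)
    rw [norm_mul, norm_mul, norm_pow, RCLike.norm_natCast]
    calc ‖a k‖ * (k * ‖y‖ ^ (k - 1)) ≤ C * ((k : ℝ) + 1) ^ p * ((k + 1) * r ^ (k - 1)) := by
          gcongr
          · exact ha k
          · linarith
      _ = _ := by ring
  have hsum : Summable fun k : ℕ => C * ((k : ℝ) + 1) ^ (p + 1) * r ^ (k - 1) := by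
    refine (summable_nat_add_iff 1).mp
      (((summable_add_pow_mul_geometric 2 (p + 1) hr0 hr1).mul_left C).congr fun k => ?_)
    push_cast
    ring
  have h0 : Summable fun k => a k * (0 : 𝕜) ^ k :=
    summable_of_ne_finset_zero (s := {0}) fun k hk => by
      rw [Finset.mem_singleton] at hk; simp [hk]
  have hx' : x ∈ ball (0 : 𝕜) r := mem_ball_zero_iff.mpr hxr
  refine (hasDerivAt_tsum_of_isPreconnected hsum isOpen_ball (convex_ball 0 r).isPreconnected
    (fun k y _ => (hasDerivAt_pow k y).const_mul (a k)) hbound (mem_ball_self hr0) h0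
    hx').congr_deriv ?_
  rw [(Summable.of_norm_bounded hsum fun k => hbound k x hx').tsum_eq_zero_add]
  simp only [CharP.cast_eq_zero, zero_mul, mul_zero, zero_add, Nat.cast_add, Nat.cast_one,
    Nat.add_sub_cancel]
  exact tsum_congr fun k => by ring

theorem mul_mul_mem_ball_zero_one {x y z : ℂ} (hx : ‖x‖ ≤ 1) (hy : y ∈ ball (0 : ℂ) 1)
    (hz : z ∈ ball (0 : ℂ) 1) : x * y * z ∈ ball (0 : ℂ) 1 := by
  rw [mem_ball_zero_iff] at hy hz ⊢
  calc ‖x * y * z‖ ≤ 1 * 1 * ‖z‖ := by rw [norm_mul, norm_mul]; gcongr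
    _ < 1 := by rwa [one_mul, one_mul]

def KernelSymmetric (g : ℂ → ℂ) (n : ℕ) (η : ℂ) (φ ψ : ℂ → ℂ) : Prop :=
  ∀ z ∈ ball (0 : ℂ) 1, ∀ w ∈ ball (0 : ℂ) 1,
    ψ z * (w ^ n * g (η * w * φ z)) = ψ w * (z ^ n * g (η * z * φ w))

namespace KernelSymmetric

variable {g : ℂ → ℂ} {n : ℕ} {η : ℂ} {φ ψ : ℂ → ℂ}

theorem exists_mul_eq_pow_mul (h : KernelSymmetric g n η φ ψ) (hg : ContinuousOn g (ball 0 1))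
    (hg0 : g 0 ≠ 0) (hη : ‖η‖ ≤ 1) (hφ : ContinuousAt φ 0)
    (hφmap : MapsTo φ (ball 0 1) (ball 0 1)) :
    ∃ α, ∀ z ∈ ball (0 : ℂ) 1, ψ z * g 0 = α * (z ^ n * g (η * φ 0 * z)) := by
  have hball : ball (0 : ℂ) 1 ∈ 𝓝 0 := ball_mem_nhds 0 one_pos
  have hb : φ 0 ∈ ball (0 : ℂ) 1 := hφmap (mem_ball_self one_pos)
  have hgc : ∀ {f : ℂ → ℂ}, ContinuousAt f 0 → f 0 ∈ ball (0 : ℂ) 1 →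
      ContinuousAt (fun w => g (f w)) 0 :=
    fun hf hf0 => (hg.continuousAt (isOpen_ball.mem_nhds hf0)).comp hf
  obtain ⟨ε, hε, hgε⟩ := Metric.eventually_nhds_iff.mp
    ((hgc continuousAt_id (mem_ball_self one_pos)).eventually_ne hg0)
  obtain ⟨z₀, hz₀, hz₀B, hz₀ε⟩ : ∃ z₀ : ℂ, z₀ ≠ 0 ∧ z₀ ∈ ball (0 : ℂ) 1 ∩ ball (0 : ℂ) ε :=
    (eventually_mem_nhdsWithin (s := {0}ᶜ).and (mem_nhdsWithin_of_mem_nhds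
      (inter_mem hball (ball_mem_nhds 0 hε)))).exists
  have hgz₀ : ∀ v ∈ ball (0 : ℂ) 1, g (η * z₀ * v) ≠ 0 := by
    intro v hv
    rw [mem_ball_zero_iff] at hv hz₀ε
    refine hgε ?_
    calc dist (η * z₀ * v) 0 ≤ 1 * ‖z₀‖ * 1 := by
          rw [dist_zero_right, norm_mul, norm_mul]; gcongr
      _ < ε := by rwa [one_mul, mul_one]
  set q : ℂ → ℂ := fun w => ψ z₀ * g (η * w * φ z₀) / (z₀ ^ n * g (η * z₀ * φ w))
  have hq : ContinuousAt q 0 :=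
    (continuousAt_const.mul (hgc (by fun_prop) (by simp))).div
      (continuousAt_const.mul (hgc (by fun_prop) (mul_mul_mem_ball_zero_one hη hz₀B hb)))
      (mul_ne_zero (pow_ne_zero n hz₀) (hgz₀ _ hb))
  have hψq : ∀ w ∈ ball (0 : ℂ) 1, ψ w = w ^ n * q w := by
    intro w hw
    have hden := mul_ne_zero (pow_ne_zero n hz₀) (hgz₀ _ (hφmap hw))
    simp only [q]
    rw [mul_div_assoc', eq_div_iff hden]
    linear_combination -(h z₀ hz₀B w hw)
  refine ⟨q 0, fun z hz => ?_⟩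
  have hL : ContinuousAt (fun w => ψ z * g (η * w * φ z)) 0 :=
    continuousAt_const.mul (hgc (by fun_prop) (by simp))
  have hR : ContinuousAt (fun w => q w * (z ^ n * g (η * z * φ w))) 0 :=
    hq.mul (continuousAt_const.mul (hgc (by fun_prop) (mul_mul_mem_ball_zero_one hη hz hb)))
  have hLR : (fun w => ψ z * g (η * w * φ z)) =ᶠ[𝓝[≠] 0]
      (fun w => q w * (z ^ n * g (η * z * φ w))) := by
    filter_upwards [self_mem_nhdsWithin, mem_nhdsWithin_of_mem_nhds hball] with w hw0 hw
    have hzw := h z hz w hw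
    rw [hψq w hw] at hzw
    exact mul_left_cancel₀ (pow_ne_zero n hw0) (by linear_combination hzw)
  have h0 := ((hL.eventuallyEq_nhds_iff_eventuallyEq_nhdsNE hR).1 hLR).eq_of_nhds
  simpa only [mul_zero, zero_mul, mul_right_comm η z] using h0

theorem kernel_mul_symm (h : KernelSymmetric g n η φ ψ) (hg0 : g 0 ≠ 0)
    (hψne : ∃ z ∈ ball (0 : ℂ) 1, ψ z ≠ 0) {α : ℂ}
    (hψ : ∀ z ∈ ball (0 : ℂ) 1, ψ z * g 0 = α * (z ^ n * g (η * φ 0 * z))) :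
    ∀ z ∈ ball (0 : ℂ) 1, ∀ w ∈ ball (0 : ℂ) 1,
      g (η * φ 0 * z) * g (η * w * φ z) = g (η * φ 0 * w) * g (η * z * φ w) := by
  have hα : α ≠ 0 := by
    rintro rfl
    obtain ⟨z, hz, hψz⟩ := hψne
    exact hψz (by simpa [hg0] using hψ z hz)
  intro z hz w hw
  rcases eq_or_ne z 0 with rfl | hz0
  · simp only [mul_zero, zero_mul, mul_right_comm η w]
    ring
  rcases eq_or_ne w 0 with rfl | hw0
  · simp only [mul_zero, zero_mul, mul_right_comm η z]
    ring
  refine mul_left_cancel₀ (mul_ne_zero hα (mul_ne_zero (pow_ne_zero n hz0) (pow_ne_zero n hw0))) ?_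
  linear_combination g 0 * h z hz w hw - (w ^ n * g (η * w * φ z)) * hψ z hz
    + (z ^ n * g (η * z * φ w)) * hψ w hw

end KernelSymmetric

theorem mul_eq_add_of_kernel_mul_symm {g φ : ℂ → ℂ} {η : ℂ} (hη0 : η ≠ 0) (hη : ‖η‖ ≤ 1)
    (hg : DifferentiableOn ℂ g (ball 0 1)) (hg'0 : deriv g 0 ≠ 0) (hφ : DifferentiableAt ℂ φ 0)
    (hφmap : MapsTo φ (ball 0 1) (ball 0 1))
    (hsymm : ∀ z ∈ ball (0 : ℂ) 1, ∀ w ∈ ball (0 : ℂ) 1,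
      g (η * φ 0 * z) * g (η * w * φ z) = g (η * φ 0 * w) * g (η * z * φ w)) :
    ∀ z ∈ ball (0 : ℂ) 1, φ z * g (η * φ 0 * z) =
      φ 0 * g (η * φ 0 * z) + deriv φ 0 * (g 0 / deriv g 0) * (z * deriv g (η * φ 0 * z)) := by
  intro z hz
  have hball : ball (0 : ℂ) 1 ∈ 𝓝 0 := ball_mem_nhds 0 one_pos
  have hg' : ∀ x ∈ ball (0 : ℂ) 1, HasDerivAt g (deriv g x) x :=
    fun x hx => (hg.differentiableAt (isOpen_ball.mem_nhds hx)).hasDerivAt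
  have hb := hφmap (mem_ball_self one_pos)
  have hL : HasDerivAt (fun w => g (η * φ 0 * z) * g (η * w * φ z))
      (g (η * φ 0 * z) * (deriv g (η * 0 * φ z) * (η * 1 * φ z))) 0 :=
    (((hg' _ (by simp)).comp 0
      (((hasDerivAt_id (0 : ℂ)).const_mul η).mul_const (φ z)))).const_mul _
  have hR : HasDerivAt (fun w => g (η * φ 0 * w) * g (η * z * φ w))
      (deriv g (η * φ 0 * 0) * (η * φ 0 * 1) * g (η * z * φ 0)
        + g (η * φ 0 * 0) * (deriv g (η * z * φ 0) * (η * z * deriv φ 0))) 0 :=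
    ((hg' _ (by simp)).comp 0 ((hasDerivAt_id (0 : ℂ)).const_mul (η * φ 0))).mul
      ((hg' _ (mul_mul_mem_ball_zero_one hη hz hb)).comp 0 (hφ.hasDerivAt.const_mul (η * z)))
  have hLR := (hL.congr_of_eventuallyEq (Filter.mem_of_superset hball
    fun w hw => (hsymm z hz w hw).symm)).unique hR
  simp only [mul_zero, zero_mul, mul_one, mul_right_comm η z] at hLR
  have hg0 : deriv g 0 * (g 0 / deriv g 0) = g 0 := mul_div_cancel₀ _ hg'0
  refine mul_left_cancel₀ (mul_ne_zero hη0 hg'0) ?_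
  linear_combination hLR - (η * deriv φ 0 * z * deriv g (η * φ 0 * z)) * hg0

theorem hardyDelta_ne_zero (k : ℕ) : hardyDelta k ≠ 0 := by
  unfold hardyDelta
  have h1 : (k : ℂ) + 1 ≠ 0 := by exact_mod_cast k.succ_ne_zero
  have h2 : (k : ℂ) + 2 ≠ 0 := by exact_mod_cast (k + 1).succ_ne_zero
  simp [h1, h2]

theorem norm_hardyDelta_le_one (k : ℕ) : ‖hardyDelta k‖ ≤ 1 := by
  have h : hardyDelta k = ((2 / (((k : ℝ) + 1) * ((k : ℝ) + 2)) : ℝ) : ℂ) := by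
    unfold hardyDelta; push_cast; ring
  rw [h, Complex.norm_real, Real.norm_of_nonneg (by positivity), div_le_one (by positivity)]
  nlinarith [k.cast_nonneg (α := ℝ)]

noncomputable def kernelDerivCoeff (n k : ℕ) : ℂ :=
  (Nat.factorial (k + n) : ℂ) / (Nat.factorial k : ℂ) * hardyDelta (k + n)

noncomputable def kernelDeriv (n : ℕ) (x : ℂ) : ℂ := ∑' k, kernelDerivCoeff n k * x ^ k

theorem kernelDerivCoeff_eq_ascFactorial (n k : ℕ) :
    kernelDerivCoeff n k = ((k + 1).ascFactorial n : ℂ) * hardyDelta (k + n) := by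
  rw [kernelDerivCoeff, ← Nat.factorial_mul_ascFactorial, Nat.cast_mul,
    mul_div_cancel_left₀ _ (Nat.cast_ne_zero.mpr k.factorial_ne_zero)]

theorem norm_kernelDerivCoeff_le (n k : ℕ) :
    ‖kernelDerivCoeff n k‖ ≤ ((n : ℝ) + 1) ^ n * ((k : ℝ) + 1) ^ n := by
  rw [kernelDerivCoeff_eq_ascFactorial, norm_mul, Complex.norm_natCast, ← mul_pow]
  calc ((k + 1).ascFactorial n : ℝ) * ‖hardyDelta (k + n)‖ ≤ ((k : ℝ) + n) ^ n * 1 := by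
        gcongr
        · exact_mod_cast Nat.ascFactorial_le_pow_add k n
        · exact norm_hardyDelta_le_one _
    _ ≤ (((n : ℝ) + 1) * ((k : ℝ) + 1)) ^ n := by
        rw [mul_one]
        gcongr
        nlinarith [k.cast_nonneg (α := ℝ), n.cast_nonneg (α := ℝ)]

theorem succ_mul_kernelDerivCoeff_succ (n k : ℕ) :
    ((k : ℂ) + 1) * kernelDerivCoeff n (k + 1) = kernelDerivCoeff (n + 1) k := by
  have h : (k + 1) * (k + 1 + 1).ascFactorial n = (k + 1).ascFactorial (n + 1) := by
    rw [Nat.succ_ascFactorial, Nat.ascFactorial_succ]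
  rw [kernelDerivCoeff_eq_ascFactorial, kernelDerivCoeff_eq_ascFactorial, ← h,
    show k + 1 + n = k + (n + 1) by omega]
  push_cast
  ring

theorem hasDerivAt_kernelDeriv (n : ℕ) {x : ℂ} (hx : ‖x‖ < 1) :
    HasDerivAt (kernelDeriv n) (kernelDeriv (n + 1) x) x := by
  refine (hasDerivAt_tsum_mul_pow (norm_kernelDerivCoeff_le n) hx).congr_deriv ?_
  refine tsum_congr fun k => ?_
  rw [← succ_mul_kernelDerivCoeff_succ]

theorem differentiableOn_kernelDeriv (n : ℕ) : DifferentiableOn ℂ (kernelDeriv n) (ball 0 1) :=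
  fun _ hx => (hasDerivAt_kernelDeriv n (mem_ball_zero_iff.mp hx)).differentiableAt
    |>.differentiableWithinAt

theorem kernelDeriv_zero (n : ℕ) : kernelDeriv n 0 = (Nat.factorial n : ℂ) * hardyDelta n := by
  rw [kernelDeriv, tsum_eq_single 0 fun k hk => by rw [zero_pow hk, mul_zero]]
  simp [kernelDerivCoeff]

theorem kernelDeriv_zero_ne_zero (n : ℕ) : kernelDeriv n 0 ≠ 0 := by
  rw [kernelDeriv_zero]
  exact mul_ne_zero (Nat.cast_ne_zero.mpr n.factorial_ne_zero) (hardyDelta_ne_zero n)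

theorem kernelDeriv_zero_div_succ (n : ℕ) :
    kernelDeriv n 0 / kernelDeriv (n + 1) 0 = ((n : ℂ) + 3) / ((n : ℂ) + 1) ^ 2 := by
  have h1 : (n : ℂ) + 1 ≠ 0 := by exact_mod_cast n.succ_ne_zero
  have h2 : (n : ℂ) + 2 ≠ 0 := by exact_mod_cast (n + 1).succ_ne_zero
  have h3 : (n : ℂ) + 3 ≠ 0 := by exact_mod_cast (n + 2).succ_ne_zero
  have hf : (Nat.factorial n : ℂ) ≠ 0 := Nat.cast_ne_zero.mpr n.factorial_ne_zero
  rw [kernelDeriv_zero, kernelDeriv_zero, hardyDelta, hardyDelta, Nat.factorial_succ]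
  push_cast
  field_simp
  ring

theorem F1_eq_pow_mul_kernelDeriv (n : ℕ) (u z : ℂ) : F1 n u z = z ^ n * kernelDeriv n (u * z) := by
  rw [F1, kernelDeriv, ← tsum_mul_left]
  refine tsum_congr fun k => ?_
  rw [kernelDerivCoeff, mul_pow, pow_add]
  ring

theorem F2_eq_pow_mul_kernelDeriv (n : ℕ) (u z : ℂ) :
    F2 n u z = z ^ (n + 1) * kernelDeriv (n + 1) (u * z) := by
  rw [F2, kernelDeriv, ← tsum_mul_left]
  refine tsum_congr fun k => ?_
  rw [kernelDerivCoeff, mul_pow, ← Nat.add_assoc, pow_add]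
  ring

theorem tsum_kernel_eq_kernelDeriv (n : ℕ) (η w v : ℂ) :
    ∑' k : ℕ, (Nat.factorial (k + n) : ℂ) / (Nat.factorial k : ℂ) *
      hardyDelta (k + n) * (η * w) ^ (k + n) * v ^ k =
      η ^ n * (w ^ n * kernelDeriv n (η * w * v)) := by
  rw [kernelDeriv, ← tsum_mul_left, ← tsum_mul_left]
  refine tsum_congr fun k => ?_
  rw [kernelDerivCoeff, mul_pow, mul_pow, mul_pow, pow_add, pow_add]
  ring

theorem stmt12_general (n : ℕ) (μ η : ℂ)
    (hμ : ‖μ‖ = 1) (hη : ‖η‖ = 1)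
    (φ ψ : ℂ → ℂ)
    (hφ : DifferentiableOn ℂ φ (Metric.ball (0 : ℂ) 1))
    (hφmap : ∀ z ∈ Metric.ball (0 : ℂ) 1, φ z ∈ Metric.ball (0 : ℂ) 1)
    (hψne : ∃ z ∈ Metric.ball (0 : ℂ) 1, ψ z ≠ 0)
    (heq : ∀ z ∈ Metric.ball (0 : ℂ) 1, ∀ w ∈ Metric.ball (0 : ℂ) 1,
      μ * ψ z * ∑' k : ℕ, (Nat.factorial (k + n) : ℂ) / (Nat.factorial k : ℂ) *
          hardyDelta (k + n) * (η * w) ^ (k + n) * (φ z) ^ k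
        = μ * ψ w * ∑' k : ℕ, (Nat.factorial (k + n) : ℂ) / (Nat.factorial k : ℂ) *
            hardyDelta (k + n) * (η * z) ^ (k + n) * (φ w) ^ k) :
    ∃ a c : ℂ, ∀ z ∈ Metric.ball (0 : ℂ) 1,
      ψ z = a / ((Nat.factorial n : ℂ) * hardyDelta n) * F1 n (η * φ 0) z ∧
      φ z * F1 n (η * φ 0) z
        = φ 0 * F1 n (η * φ 0) z +
            c * (((n : ℂ) + 3) / ((n : ℂ) + 1) ^ 2) * F2 n (η * φ 0) z := by
  have hη0 : η ≠ 0 := by rintro rfl; simp at hη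
  have hμη : μ * η ^ n ≠ 0 := mul_ne_zero (by rintro rfl; simp at hμ) (pow_ne_zero n hη0)
  have hsymm : KernelSymmetric (kernelDeriv n) n η φ ψ := fun z hz w hw => by
    have h := heq z hz w hw
    rw [tsum_kernel_eq_kernelDeriv, tsum_kernel_eq_kernelDeriv] at h
    exact mul_left_cancel₀ hμη (by linear_combination h)
  have hφ0 : DifferentiableAt ℂ φ 0 := hφ.differentiableAt (ball_mem_nhds 0 one_pos)
  have hg := differentiableOn_kernelDeriv n
  have hderiv : ∀ x ∈ ball (0 : ℂ) 1, deriv (kernelDeriv n) x = kernelDeriv (n + 1) x :=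
    fun x hx => (hasDerivAt_kernelDeriv n (mem_ball_zero_iff.mp hx)).deriv
  obtain ⟨α, hψ⟩ := hsymm.exists_mul_eq_pow_mul hg.continuousOn (kernelDeriv_zero_ne_zero n) hη.le
    hφ0.continuousAt hφmap
  have hφF := mul_eq_add_of_kernel_mul_symm hη0 hη.le hg
    (by rw [hderiv 0 (mem_ball_self one_pos)]; exact kernelDeriv_zero_ne_zero (n + 1)) hφ0 hφmap
    (hsymm.kernel_mul_symm (kernelDeriv_zero_ne_zero n) hψne hψ)
  refine ⟨α, deriv φ 0, fun z hz => ⟨?_, ?_⟩⟩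
  · rw [F1_eq_pow_mul_kernelDeriv, ← kernelDeriv_zero, div_mul_eq_mul_div,
      eq_div_iff (kernelDeriv_zero_ne_zero n)]
    exact hψ z hz
  · have hbz : η * φ 0 * z ∈ ball (0 : ℂ) 1 :=
      mul_mul_mem_ball_zero_one hη.le (hφmap 0 (mem_ball_self one_pos)) hz
    have h := hφF z hz
    rw [hderiv 0 (mem_ball_self one_pos), hderiv _ hbz, kernelDeriv_zero_div_succ] at h
    rw [F1_eq_pow_mul_kernelDeriv, F2_eq_pow_mul_kernelDeriv]
    linear_combination z ^ n * h

/-- Theorem 2.5 (forward direction): if the reproducing-kernel identity for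
complex symmetry of `D_{n,ψ,φ}` with conjugation `C_{μ,η}` holds on the
derivative Hardy space `S²₁(𝔻)`, then, with `b = φ(0)`, there exist `a, c ∈ ℂ`
with `ψ = (a/(n!δ_n))F₁` and `φ·F₁ = b·F₁ + c((n+3)/(n+1)²)F₂` on the disk. -/
theorem stmt12 (n : ℕ) (hn : 1 ≤ n) (μ η : ℂ)
    (hμ : ‖μ‖ = 1) (hη : ‖η‖ = 1)
    (φ ψ : ℂ → ℂ)
    (hφ : DifferentiableOn ℂ φ (Metric.ball (0 : ℂ) 1))
    (hφmap : ∀ z ∈ Metric.ball (0 : ℂ) 1, φ z ∈ Metric.ball (0 : ℂ) 1)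
    (hψ : DifferentiableOn ℂ ψ (Metric.ball (0 : ℂ) 1))
    (hψne : ∃ z ∈ Metric.ball (0 : ℂ) 1, ψ z ≠ 0)
    (heq : ∀ z ∈ Metric.ball (0 : ℂ) 1, ∀ w ∈ Metric.ball (0 : ℂ) 1,
      μ * ψ z * ∑' k : ℕ, (Nat.factorial (k + n) : ℂ) / (Nat.factorial k : ℂ) *
          hardyDelta (k + n) * (η * w) ^ (k + n) * (φ z) ^ k
        = μ * ψ w * ∑' k : ℕ, (Nat.factorial (k + n) : ℂ) / (Nat.factorial k : ℂ) *
            hardyDelta (k + n) * (η * z) ^ (k + n) * (φ w) ^ k) :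
    ∃ a c : ℂ, ∀ z ∈ Metric.ball (0 : ℂ) 1,
      ψ z = a / ((Nat.factorial n : ℂ) * hardyDelta n) * F1 n (η * φ 0) z ∧
      φ z * F1 n (η * φ 0) z
        = φ 0 * F1 n (η * φ 0) z +
            c * (((n : ℂ) + 3) / ((n : ℂ) + 1) ^ 2) * F2 n (η * φ 0) z :=
  stmt12_general n μ η hμ hη φ ψ hφ hφmap hψne heq
end
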